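/- arXiv:1802.09336 — 5 statements merged into one kernel-verified Lean document; each statement's English description precedes it below -/
import Mathlib

section
/- Let k ≥ 2 and let a, b ∈ ZMod (2k) be such that {a, σ(a)} and {b, σ(b)} are diagonals of the 2k-gon with {a, σ(a)} ≠ {b, σ(b)}. Then the diagonals {a, σ(a)} and {b, σ(b)} do not cross. -/
/-- `e` is a diagonal of the `m`-gon with vertex set `ZMod m`:
a 2-element set `{a, b}` with `b ∉ {a, a + 1, a - 1}`. -/
def IsDiag (m : ℕ) (e : Finset (ZMod m)) : Prop :=
  ∃ a b : ZMod m, e = {a, b} ∧ b ≠ a ∧ b ≠ a + 1 ∧ b ≠ a - 1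

/-- `x` lies in the open cyclic arc `{a+1, a+2, …, b-1}` from `a` to `b`. -/
def InArc (m : ℕ) (a b x : ZMod m) : Prop :=
  0 < (x - a).val ∧ (x - a).val < (b - a).val

/-- The diagonals `{a,b}` and `{c,d}` cross: the four points are pairwise
distinct and exactly one of `c, d` lies in the open arc from `a` to `b`. -/
def CrossPts (m : ℕ) (a b c d : ZMod m) : Prop :=
  ([a, b, c, d] : List (ZMod m)).Pairwise (· ≠ ·) ∧
    Xor' (InArc m a b c) (InArc m a b d)

/-- Crossing of diagonals, as unordered pairs. -/
def Cross (m : ℕ) (e f : Finset (ZMod m)) : Prop :=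
  ∃ a b c d : ZMod m, e = {a, b} ∧ f = {c, d} ∧ CrossPts m a b c d

/-- `A` is a set of pairwise non-crossing diagonals of the `m`-gon. -/
def NonCrossingSet (m : ℕ) (A : Set (Finset (ZMod m))) : Prop :=
  (∀ e ∈ A, IsDiag m e) ∧ ∀ e ∈ A, ∀ f ∈ A, ¬ Cross m e f

/-- The reflection `σ(i) = -1 - i` of the `2k`-gon. -/
def sigmaRefl (k : ℕ) (i : ZMod (2 * k)) : ZMod (2 * k) := -1 - i

/-- A set of diagonals of the `2k`-gon is `σ`-invariant if it is closed under
the induced action `σ{a,b} = {σ a, σ b}`. -/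
def SigmaInv (k : ℕ) (A : Set (Finset (ZMod (2 * k)))) : Prop :=
  ∀ e ∈ A, e.image (sigmaRefl k) ∈ A


lemma arc_sub {n : ℕ} [NeZero n] (t s : ZMod n) (h : 0 < s.val ∧ s.val < t.val) :
    0 < (t - s).val ∧ (t - s).val < t.val := by
  obtain ⟨h1, h2⟩ := h
  have htn : t.val < n := ZMod.val_lt t
  have he : t - s = ((t.val - s.val : ℕ) : ZMod n) := by
    rw [Nat.cast_sub h2.le]
    simp [ZMod.natCast_val, ZMod.cast_id]
  rw [he, ZMod.val_natCast, Nat.mod_eq_of_lt (by omega)]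
  omega

lemma inArc_reflect {n : ℕ} [NeZero n] (p q x : ZMod n) :
    InArc n p q x ↔ InArc n p q (p + q - x) := by
  unfold InArc
  constructor
  · intro h
    have key : p + q - x - p = (q - p) - (x - p) := by ring
    rw [key]
    exact arc_sub _ _ h
  · intro h
    have key : x - p = (q - p) - (p + q - x - p) := by ring
    rw [key]
    exact arc_sub _ _ h

lemma diag_ne {m : ℕ} {a c : ZMod m} (h : IsDiag m {a, c}) : a ≠ c := by
  obtain ⟨x, y, hxy, hyx, -, -⟩ := h
  intro hac
  have h2 : ({a, c} : Finset (ZMod m)).card = 2 := by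
    rw [hxy]; exact Finset.card_pair (Ne.symm hyx)
  rw [← hac] at h2
  simp at h2

lemma pair_sum {m : ℕ} {a c p q : ZMod m} (hne : a ≠ c)
    (h : ({a, c} : Finset (ZMod m)) = {p, q}) : p + q = a + c := by
  have hp : p ∈ ({a, c} : Finset (ZMod m)) := by rw [h]; simp
  have hq : q ∈ ({a, c} : Finset (ZMod m)) := by rw [h]; simp
  have hca : c ∈ ({p, q} : Finset (ZMod m)) := by rw [← h]; simp
  have haa : a ∈ ({p, q} : Finset (ZMod m)) := by rw [← h]; simp
  simp only [Finset.mem_insert, Finset.mem_singleton] at hp hq hca haa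
  rcases hp with rfl | rfl <;> rcases hq with rfl | rfl
  · rcases hca with rfl | rfl <;> [exact absurd rfl hne; exact absurd rfl hne]
  · ring
  · ring
  · rcases haa with rfl | rfl <;> [exact absurd rfl hne; exact absurd rfl hne]

/-- Two distinct symmetric diagonals `{a, σ a}` and `{b, σ b}`
of the `2k`-gon do not cross. -/
theorem symmetric_diagonals_do_not_cross (k : ℕ) (hk : 2 ≤ k) (a b : ZMod (2 * k))
    (ha : IsDiag (2 * k) {a, sigmaRefl k a}) (hb : IsDiag (2 * k) {b, sigmaRefl k b})
    (hne : ({a, sigmaRefl k a} : Finset (ZMod (2 * k))) ≠ {b, sigmaRefl k b}) :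
    ¬ Cross (2 * k) {a, sigmaRefl k a} {b, sigmaRefl k b} := by
  haveI : NeZero (2 * k) := ⟨by omega⟩
  intro hcr
  obtain ⟨p, q, c, d, he, hf, hpw, hxor⟩ := hcr
  have ha' : a ≠ sigmaRefl k a := diag_ne ha
  have hb' : b ≠ sigmaRefl k b := diag_ne hb
  have hpq : p + q = -1 := by
    rw [pair_sum ha' he]; simp [sigmaRefl]
  have hcd : c + d = -1 := by
    rw [pair_sum hb' hf]; simp [sigmaRefl]
  have hd : d = p + q - c := by rw [hpq]; rw [eq_sub_iff_add_eq, add_comm]; exact hcd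
  rw [hd] at hxor
  rcases hxor with ⟨h1, h2⟩ | ⟨h1, h2⟩
  · exact h2 ((inArc_reflect p q c).mp h1)
  · exact h2 ((inArc_reflect p q c).mpr h1)
end

section
/- Let k ≥ 2 and let d = {a, b} be a diagonal of the 2k-gon such that exactly one of a, b has its canonical representative in {0, 1, …, k−1}, and such that σ(d) ≠ d. Then d crosses σ(d). -/
namespace ZMod

variable {n : ℕ} [NeZero n]

theorem val_neg_one_sub (x : ZMod n) : (-1 - x).val = n - 1 - x.val := by
  have hx := x.val_lt
  have : -1 - x = ((n - 1 - x.val : ℕ) : ZMod n) := by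
    rw [Nat.cast_sub (by omega), Nat.cast_sub NeZero.one_le, natCast_self, natCast_val, cast_id',
      id_eq, Nat.cast_one, zero_sub]
  rw [this, val_natCast_of_lt (by omega)]

theorem val_sub_of_lt {x y : ZMod n} (h : x.val < y.val) : (x - y).val = n - (y.val - x.val) := by
  have hne : y - x ≠ 0 := fun h0 => by rw [sub_eq_zero.1 h0] at h; exact lt_irrefl _ h
  rw [← neg_sub, neg_val, if_neg hne, val_sub h.le]

end ZMod

section Arc

variable {m : ℕ} [NeZero m]

theorem inArc_iff_of_val_lt {a b : ZMod m} (hab : a.val < b.val) (x : ZMod m) :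
    InArc m a b x ↔ a.val < x.val ∧ x.val < b.val := by
  have hb := b.val_lt
  rw [InArc, ZMod.val_sub hab.le]
  rcases le_or_gt a.val x.val with hax | hxa
  · rw [ZMod.val_sub hax]; omega
  · rw [ZMod.val_sub_of_lt hxa]; omega

end Arc

section Reflection

theorem image_sigmaRefl_pair {k : ℕ} (a b : ZMod (2 * k)) :
    ({a, b} : Finset (ZMod (2 * k))).image (sigmaRefl k) = {sigmaRefl k a, sigmaRefl k b} := by
  rw [Finset.image_insert, Finset.image_singleton]

variable {k : ℕ} [NeZero k]

theorem val_sigmaRefl (x : ZMod (2 * k)) : (sigmaRefl k x).val = 2 * k - 1 - x.val :=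
  ZMod.val_neg_one_sub x

theorem image_sigmaRefl_pair_of_val_add_val {a b : ZMod (2 * k)} (h : a.val + b.val = 2 * k - 1) :
    ({a, b} : Finset (ZMod (2 * k))).image (sigmaRefl k) = {a, b} := by
  have hb : sigmaRefl k a = b := ZMod.val_injective _ (by rw [val_sigmaRefl]; omega)
  have ha : sigmaRefl k b = a := by rw [← hb, sigmaRefl, sigmaRefl, sub_sub_cancel]
  rw [image_sigmaRefl_pair, ha, hb, Finset.pair_comm]

/-- In coordinates `0 ≤ a < k ≤ b < 2k` the arc from `a` to `b` is the interval `(a, b)`, which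
contains `σ a = 2k - 1 - a` iff `a + b > 2k - 1` and `σ b = 2k - 1 - b` iff `a + b < 2k - 1`. -/
theorem crossPts_sigmaRefl {a b : ZMod (2 * k)} (ha : a.val < k) (hb : k ≤ b.val)
    (hab : a.val + b.val ≠ 2 * k - 1) :
    CrossPts (2 * k) a b (sigmaRefl k a) (sigmaRefl k b) := by
  have hbk := b.val_lt
  have hσa := val_sigmaRefl a
  have hσb := val_sigmaRefl b
  refine ⟨List.Pairwise.of_map (S := fun x y : ℕ => x ≠ y) ZMod.val
    (fun x y hxy h => hxy (congrArg _ h)) ?_, ?_⟩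
  · simp only [List.map_cons, List.map_nil, hσa, hσb, List.pairwise_cons, List.mem_cons,
      List.not_mem_nil, or_false, forall_eq_or_imp, forall_eq, List.Pairwise.nil,
      false_implies, implies_true, and_true]
    omega
  · simp only [Xor', xor_def, inArc_iff_of_val_lt (show a.val < b.val by omega), hσa, hσb]
    omega

theorem cross_image_sigmaRefl {a b : ZMod (2 * k)} (ha : a.val < k) (hb : k ≤ b.val)
    (hab : a.val + b.val ≠ 2 * k - 1) :
    Cross (2 * k) {a, b} (({a, b} : Finset (ZMod (2 * k))).image (sigmaRefl k)) :=
  ⟨a, b, _, _, rfl, image_sigmaRefl_pair a b, crossPts_sigmaRefl ha hb hab⟩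

end Reflection

theorem axis_crossing_diagonal_crosses_its_mirror_general (k : ℕ)
    (a b : ZMod (2 * k))
    (haxis : Xor' (a.val < k) (b.val < k))
    (hns : ({a, b} : Finset (ZMod (2 * k))).image (sigmaRefl k) ≠ {a, b}) :
    Cross (2 * k) {a, b} (({a, b} : Finset (ZMod (2 * k))).image (sigmaRefl k)) := by
  have : NeZero k := ⟨by rintro rfl; simp [Xor'] at haxis⟩
  have hab : a.val + b.val ≠ 2 * k - 1 := fun h => hns (image_sigmaRefl_pair_of_val_add_val h)
  rcases haxis with ⟨ha, hb⟩ | ⟨hb, ha⟩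
  · exact cross_image_sigmaRefl ha (not_lt.1 hb) hab
  · rw [Finset.pair_comm]
    exact cross_image_sigmaRefl hb (not_lt.1 ha) (by omega)

/-- A diagonal `d = {a, b}` of the `2k`-gon which crosses the
symmetry axis (exactly one of `a, b` has canonical representative in
`{0, …, k-1}`) and is not fixed by `σ` crosses its mirror image `σ(d)`. -/
theorem axis_crossing_diagonal_crosses_its_mirror (k : ℕ) (hk : 2 ≤ k)
    (a b : ZMod (2 * k)) (hd : IsDiag (2 * k) {a, b})
    (haxis : Xor' (a.val < k) (b.val < k))
    (hns : ({a, b} : Finset (ZMod (2 * k))).image (sigmaRefl k) ≠ {a, b}) :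
    Cross (2 * k) {a, b} (({a, b} : Finset (ZMod (2 * k))).image (sigmaRefl k)) :=
  axis_crossing_diagonal_crosses_its_mirror_general k a b haxis hns
end

section
/- Let k ≥ 2 and let A be a σ-invariant non-crossing set of diagonals of the 2k-gon. Then every diagonal d = {a, b} ∈ A with σ(d) ≠ d has both endpoints with canonical representatives in {0, 1, …, k−1}, or both endpoints with canonical representatives in {k, k+1, …, 2k−1}. -/
private lemma val_sub_cases {n : ℕ} [NeZero n] (x y : ZMod n) :
    (x - y).val + y.val = x.val ∨ (x - y).val + y.val = x.val + n := by
  have h : ((x - y) + y).val = x.val := by rw [sub_add_cancel]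
  rw [ZMod.val_add] at h
  have h1 : (x - y).val < n := ZMod.val_lt _
  have h2 : y.val < n := ZMod.val_lt _
  by_cases hlt : (x - y).val + y.val < n
  · left; rwa [Nat.mod_eq_of_lt hlt] at h
  · right
    rw [Nat.mod_eq_sub_mod (by omega), Nat.mod_eq_of_lt (by omega)] at h
    omega

private lemma key (k : ℕ) (hk : 2 ≤ k)
    (A : Set (Finset (ZMod (2 * k))))
    (hA : NonCrossingSet (2 * k) A) (hinv : SigmaInv k A)
    (a b : ZMod (2 * k)) (hmem : ({a, b} : Finset (ZMod (2 * k))) ∈ A)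
    (hns : ({a, b} : Finset (ZMod (2 * k))).image (sigmaRefl k) ≠ {a, b})
    (ha : a.val < k) (hb : k ≤ b.val) : False := by
  haveI : NeZero (2 * k) := ⟨by omega⟩
  haveI : Fact (1 < 2 * k) := ⟨by omega⟩
  have han : a.val < 2 * k := ZMod.val_lt _
  have hbn : b.val < 2 * k := ZMod.val_lt _
  set c := sigmaRefl k a with hcdef
  set d := sigmaRefl k b with hddef
  have hone : (1 : ZMod (2 * k)).val = 1 := ZMod.val_one _
  have hm1 : (-1 : ZMod (2 * k)).val = 2 * k - 1 := by
    have h0 : (-1 : ZMod (2 * k)) = 0 - 1 := by ring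
    have hl : (0 - 1 : ZMod (2 * k)).val < 2 * k := ZMod.val_lt _
    rw [h0]
    rcases val_sub_cases (0 : ZMod (2 * k)) 1 with h | h <;>
      rw [ZMod.val_zero, hone] at h <;> omega
  have hceq : c = -1 - a := rfl
  have hdeq : d = -1 - b := rfl
  have hc : c.val + a.val + 1 = 2 * k := by
    have hcn : (-1 - a : ZMod (2 * k)).val < 2 * k := ZMod.val_lt _
    rw [hceq]
    rcases val_sub_cases (-1 : ZMod (2 * k)) a with h | h <;>
      rw [hm1] at h <;> omega
  have hd : d.val + b.val + 1 = 2 * k := by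
    have hdn : (-1 - b : ZMod (2 * k)).val < 2 * k := ZMod.val_lt _
    rw [hdeq]
    rcases val_sub_cases (-1 : ZMod (2 * k)) b with h | h <;>
      rw [hm1] at h <;> omega
  have himg : ({a, b} : Finset (ZMod (2 * k))).image (sigmaRefl k) = {c, d} := by
    simp [Finset.image_insert, hcdef, hddef]
  have hsum : a.val + b.val ≠ 2 * k - 1 := by
    intro h
    apply hns
    rw [himg]
    have hcb : c = b := ZMod.val_injective _ (by omega)
    have hda : d = a := ZMod.val_injective _ (by omega)
    rw [hcb, hda, Finset.pair_comm]
  have hba : (b - a).val = b.val - a.val := by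
    have := ZMod.val_lt (b - a)
    rcases val_sub_cases b a with h | h <;> omega
  have hca : (c - a).val = c.val - a.val := by
    have := ZMod.val_lt (c - a)
    rcases val_sub_cases c a with h | h <;> omega
  have hda2 := val_sub_cases d a
  have hdan := ZMod.val_lt (d - a)
  have hcross := hA.2 _ hmem _ (hinv _ hmem)
  rw [himg] at hcross
  apply hcross
  refine ⟨a, b, c, d, rfl, rfl, ?_, ?_⟩
  · have hne : ∀ x y : ZMod (2 * k), x.val ≠ y.val → x ≠ y := fun x y h hxy =>
      h (congrArg ZMod.val hxy)
    refine List.Pairwise.cons ?_ (List.Pairwise.cons ?_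
      (List.Pairwise.cons ?_ (List.Pairwise.cons (by simp) List.Pairwise.nil)))
    · intro y hy
      simp only [List.mem_cons, List.not_mem_nil, or_false] at hy
      rcases hy with rfl | rfl | rfl <;> exact hne _ _ (by omega)
    · intro y hy
      simp only [List.mem_cons, List.not_mem_nil, or_false] at hy
      rcases hy with rfl | rfl <;> exact hne _ _ (by omega)
    · intro y hy
      simp only [List.mem_cons, List.not_mem_nil, or_false] at hy
      subst hy
      exact hne _ _ (by omega)
  · by_cases hcase : a.val + b.val < 2 * k - 1
    · right
      refine ⟨⟨?_, ?_⟩, ?_⟩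
      · rcases hda2 with h | h <;> omega
      · rcases hda2 with h | h <;> omega
      · simp only [InArc, hca, hba]
        omega
    · left
      constructor
      · simp only [InArc, hca, hba]
        omega
      · rcases hda2 with h | h <;>
          simp only [InArc, not_and, not_lt, hba] <;> omega

/-- In a `σ`-invariant non-crossing set of diagonals of the
`2k`-gon, every diagonal `{a, b}` not fixed by `σ` has both endpoints with
canonical representatives in `{0, …, k-1}`, or both in `{k, …, 2k-1}`. -/
theorem nonsymmetric_diagonal_in_one_half (k : ℕ) (hk : 2 ≤ k)
    (A : Set (Finset (ZMod (2 * k))))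
    (hA : NonCrossingSet (2 * k) A) (hinv : SigmaInv k A)
    (a b : ZMod (2 * k)) (hmem : ({a, b} : Finset (ZMod (2 * k))) ∈ A)
    (hns : ({a, b} : Finset (ZMod (2 * k))).image (sigmaRefl k) ≠ {a, b}) :
    (a.val < k ∧ b.val < k) ∨ (k ≤ a.val ∧ k ≤ b.val) := by
  haveI : NeZero (2 * k) := ⟨by omega⟩
  by_contra h
  push_neg at h
  have han : a.val < 2 * k := ZMod.val_lt _
  have hbn : b.val < 2 * k := ZMod.val_lt _
  rcases (by omega : (a.val < k ∧ k ≤ b.val) ∨ (k ≤ a.val ∧ b.val < k)) with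
    ⟨h1, h2⟩ | ⟨h1, h2⟩
  · exact key k hk A hA hinv a b hmem hns h1 h2
  · rw [Finset.pair_comm] at hmem hns
    exact key k hk A hA hinv b a hmem hns h2 h1
end

section
/- Let m ≥ 4 and let v : ZMod m → ℝ² be the vertices of the regular m-gon, v(j) = (cos(2π·j.val/m), sin(2π·j.val/m)). Let {a,b} and {c,d} be diagonals of the m-gon with a, b, c, d pairwise distinct. Then the open segments openSegment ℝ (v a) (v b) and openSegment ℝ (v c) (v d) have a common point if and only if the diagonals {a,b} and {c,d} cross combinatorially. -/
/-- The vertices of the regular `m`-gon in the plane. -/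
noncomputable def regVertex (m : ℕ) (j : ZMod m) : ℝ × ℝ :=
  (Real.cos (2 * Real.pi * j.val / m), Real.sin (2 * Real.pi * j.val / m))

/-!
Write `orient p q r` for twice the signed area of the triangle `pqr`. For points of the unit
circle at angles `2x`, `2x + 2u`, `2x + 2w` it equals `4 sin u sin w sin (w - u)`. Taking
`u = π (b - a).val / m` and `w = π (c - a).val / m`, both in `(0, π)`, its sign is that of
`w - u`, so `c` lies on the arc from `a` to `b` exactly when `v c` is on the negative side of the
chord `v a v b`.

Two chords of the unit circle meet exactly when the endpoints of the second lie strictly on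
opposite sides of the line through the first: the point where `v c v d` crosses that line lies
strictly inside the disc, and the points of the line inside the disc are those strictly between
`v a` and `v b`.
-/

open Real

def orient (p q r : ℝ × ℝ) : ℝ :=
  (q.1 - p.1) * (r.2 - p.2) - (q.2 - p.2) * (r.1 - p.1)

def sqNorm (x : ℝ × ℝ) : ℝ :=
  x.1 ^ 2 + x.2 ^ 2

lemma orient_smul_add_smul (p q u v : ℝ × ℝ) {s t : ℝ} (h : s + t = 1) :
    orient p q (s • u + t • v) = s * orient p q u + t * orient p q v := by
  obtain rfl : s = 1 - t := by linarith
  simp only [orient, Prod.fst_add, Prod.snd_add, Prod.smul_fst, Prod.smul_snd, smul_eq_mul]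
  ring

lemma orient_eq_zero_of_mem_openSegment {p q x : ℝ × ℝ} (hx : x ∈ openSegment ℝ p q) :
    orient p q x = 0 := by
  obtain ⟨s, t, -, -, hst, rfl⟩ := hx
  rw [orient_smul_add_smul p q p q hst]
  simp only [orient]
  ring

lemma orient_mul_orient_neg_of_mem_openSegment {p q u v x : ℝ × ℝ}
    (hx : x ∈ openSegment ℝ u v) (hpqx : orient p q x = 0) (hv : orient p q v ≠ 0) :
    orient p q u * orient p q v < 0 := by
  obtain ⟨s, t, hs, ht, hst, rfl⟩ := hx
  rw [orient_smul_add_smul p q u v hst] at hpqx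
  have hv2 : 0 < orient p q v ^ 2 := by positivity
  have hscaled : s * (orient p q u * orient p q v) = -(t * orient p q v ^ 2) := by
    linear_combination orient p q v * hpqx
  exact neg_of_mul_neg_right (hscaled ▸ neg_neg_of_pos (mul_pos ht hv2)) hs.le

lemma exists_mem_openSegment_orient_eq_zero {p q u v : ℝ × ℝ}
    (h : orient p q u * orient p q v < 0) :
    ∃ x ∈ openSegment ℝ u v, orient p q x = 0 := by
  set α := orient p q u
  set β := orient p q v
  have hden : 0 < (β - α) ^ 2 := by nlinarith [sq_nonneg α, sq_nonneg β]
  have hst : (β ^ 2 - α * β) / (β - α) ^ 2 + (α ^ 2 - α * β) / (β - α) ^ 2 = 1 := by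
    rw [← add_div, div_eq_one_iff_eq hden.ne']
    ring
  refine ⟨_, ⟨_, _, div_pos (by nlinarith [sq_nonneg β]) hden,
    div_pos (by nlinarith [sq_nonneg α]) hden, hst, rfl⟩, ?_⟩
  rw [orient_smul_add_smul p q u v hst]
  field_simp
  ring

lemma sqNorm_sub_pos {u v : ℝ × ℝ} (h : u ≠ v) : 0 < sqNorm (u - v) := by
  rw [Ne, Prod.ext_iff, ← sub_eq_zero, ← sub_eq_zero (a := u.2)] at h
  simp only [sqNorm, Prod.fst_sub, Prod.snd_sub]
  rcases not_and_or.mp h with h | h <;> positivity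

lemma sqNorm_smul_add_smul (u v : ℝ × ℝ) {s t : ℝ} (h : s + t = 1) :
    sqNorm (s • u + t • v) = s * sqNorm u + t * sqNorm v - s * t * sqNorm (u - v) := by
  obtain rfl : s = 1 - t := by linarith
  simp only [sqNorm, Prod.fst_add, Prod.snd_add, Prod.smul_fst, Prod.smul_snd, Prod.fst_sub,
    Prod.snd_sub, smul_eq_mul]
  ring

lemma sqNorm_lt_one_of_mem_openSegment {u v x : ℝ × ℝ} (hu : sqNorm u = 1) (hv : sqNorm v = 1)
    (huv : u ≠ v) (hx : x ∈ openSegment ℝ u v) : sqNorm x < 1 := by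
  obtain ⟨s, t, hs, ht, hst, rfl⟩ := hx
  rw [sqNorm_smul_add_smul u v hst, hu, hv]
  nlinarith [mul_pos (mul_pos hs ht) (sqNorm_sub_pos huv)]

lemma exists_eq_smul_add_smul_of_orient_eq_zero {u v x : ℝ × ℝ} (huv : u ≠ v)
    (hx : orient u v x = 0) : ∃ s : ℝ, x = (1 - s) • u + s • v := by
  have hvu := (sqNorm_sub_pos huv.symm).ne'
  refine ⟨((x.1 - u.1) * (v.1 - u.1) + (x.2 - u.2) * (v.2 - u.2)) / sqNorm (v - u), ?_⟩
  simp only [orient] at hx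
  simp only [sqNorm, Prod.fst_sub, Prod.snd_sub] at hvu ⊢
  ext <;> simp only [Prod.fst_add, Prod.snd_add, Prod.smul_fst, Prod.smul_snd, smul_eq_mul] <;>
    field_simp
  · linear_combination -(v.2 - u.2) * hx
  · linear_combination (v.1 - u.1) * hx

lemma mem_openSegment_of_orient_eq_zero {u v x : ℝ × ℝ} (hu : sqNorm u = 1) (hv : sqNorm v = 1)
    (huv : u ≠ v) (hx : orient u v x = 0) (hx1 : sqNorm x < 1) : x ∈ openSegment ℝ u v := by
  obtain ⟨s, rfl⟩ := exists_eq_smul_add_smul_of_orient_eq_zero huv hx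
  rw [sqNorm_smul_add_smul u v (sub_add_cancel 1 s), hu, hv] at hx1
  have hs : 0 < (1 - s) * s := by nlinarith [sqNorm_sub_pos huv]
  refine ⟨1 - s, s, ?_, ?_, sub_add_cancel 1 s, rfl⟩ <;> nlinarith

theorem openSegment_inter_nonempty_iff_orient_mul_neg {u v w z : ℝ × ℝ}
    (hu : sqNorm u = 1) (hv : sqNorm v = 1) (hw : sqNorm w = 1) (hz : sqNorm z = 1)
    (hz0 : orient u v z ≠ 0) :
    (openSegment ℝ u v ∩ openSegment ℝ w z).Nonempty ↔ orient u v w * orient u v z < 0 := by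
  constructor
  · rintro ⟨x, hxuv, hxwz⟩
    exact orient_mul_orient_neg_of_mem_openSegment hxwz
      (orient_eq_zero_of_mem_openSegment hxuv) hz0
  · intro h
    have huv : u ≠ v := by
      rintro rfl
      simp [orient] at h
    have hwz : w ≠ z := by
      rintro rfl
      nlinarith
    obtain ⟨x, hxwz, hx⟩ := exists_mem_openSegment_orient_eq_zero h
    exact ⟨x, mem_openSegment_of_orient_eq_zero hu hv huv hx
      (sqNorm_lt_one_of_mem_openSegment hw hz hwz hxwz), hxwz⟩

lemma sqNorm_regVertex (m : ℕ) (j : ZMod m) : sqNorm (regVertex m j) = 1 :=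
  cos_sq_add_sin_sq _

lemma orient_cos_sin (x u w : ℝ) :
    orient (cos x, sin x) (cos (x + 2 * u), sin (x + 2 * u)) (cos (x + 2 * w), sin (x + 2 * w))
      = 4 * sin u * sin w * sin (w - u) := by
  simp only [orient, cos_add, sin_add, cos_two_mul, sin_two_mul, sin_sub, cos_sq']
  linear_combination (4 * sin u * cos u * sin w ^ 2 - 4 * sin u ^ 2 * sin w * cos w) *
    sin_sq_add_cos_sq x

lemma regVertex_eq_cos_sin_add (m : ℕ) [NeZero m] (a b : ZMod m) :
    regVertex m b = (cos (2 * π * a.val / m + 2 * (π * (b - a).val / m)),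
      sin (2 * π * a.val / m + 2 * (π * (b - a).val / m))) := by
  have hm : (m : ℝ) ≠ 0 := NeZero.ne _
  have hval : (b - a).val + a.val = b.val + m * (((b - a).val + a.val) / m) := by
    have hb := ZMod.val_add (b - a) a
    rw [sub_add_cancel] at hb
    rw [hb]
    exact (Nat.mod_add_div _ _).symm
  have hangle : 2 * π * a.val / m + 2 * (π * (b - a).val / m)
      = 2 * π * b.val / m + (((b - a).val + a.val) / m : ℕ) * (2 * π) := by
    have := congrArg (fun n : ℕ => 2 * π * n / m) hval
    push_cast at this
    field_simp at this ⊢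
    linear_combination this
  rw [hangle, cos_add_nat_mul_two_pi, sin_add_nat_mul_two_pi]
  rfl

lemma orient_regVertex (m : ℕ) [NeZero m] (a b c : ZMod m) :
    orient (regVertex m a) (regVertex m b) (regVertex m c)
      = 4 * sin (π * (b - a).val / m) * sin (π * (c - a).val / m)
          * sin (π * (c - a).val / m - π * (b - a).val / m) := by
  rw [regVertex_eq_cos_sin_add m a b, regVertex_eq_cos_sin_add m a c, ← orient_cos_sin]
  rfl

lemma sign_sin_of_mem_Ioo {x : ℝ} (h0 : -π < x) (h1 : x < π) :
    SignType.sign (sin x) = SignType.sign x := by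
  rcases lt_trichotomy x 0 with hx | rfl | hx
  · rw [sign_neg hx, sign_neg (sin_neg_of_neg_of_neg_pi_lt hx h0)]
  · simp
  · rw [sign_pos hx, sign_pos (sin_pos_of_pos_of_lt_pi hx h1)]

lemma sign_orient_regVertex (m : ℕ) [NeZero m] {a b c : ZMod m} (hab : a ≠ b) (hac : a ≠ c) :
    SignType.sign (orient (regVertex m a) (regVertex m b) (regVertex m c))
      = SignType.sign (((c - a).val : ℝ) - (b - a).val) := by
  have hm : (0 : ℝ) < m := by exact_mod_cast Nat.pos_of_neZero m
  have hangle : ∀ x : ZMod m, a ≠ x → 0 < π * (x - a).val / m ∧ π * (x - a).val / m < π := by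
    intro x hx
    have h0 : (0 : ℝ) < (x - a).val := by
      exact_mod_cast ZMod.val_pos.mpr (sub_ne_zero_of_ne hx.symm)
    have h1 : ((x - a).val : ℝ) < m := by exact_mod_cast ZMod.val_lt _
    constructor
    · positivity
    · rw [div_lt_iff₀ hm]; nlinarith [pi_pos]
  obtain ⟨hb0, hb1⟩ := hangle b hab
  obtain ⟨hc0, hc1⟩ := hangle c hac
  rw [orient_regVertex, sign_mul, sign_mul, sign_mul, sign_sin_of_mem_Ioo (by linarith) hb1,
    sign_sin_of_mem_Ioo (by linarith) hc1, sign_sin_of_mem_Ioo (by linarith) (by linarith),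
    sign_pos hb0, sign_pos hc0, sign_pos (by norm_num : (0 : ℝ) < 4), one_mul, one_mul, one_mul,
    ← sub_div, ← mul_sub, mul_div_right_comm, sign_mul, sign_pos (by positivity : 0 < π / m),
    one_mul]

lemma orient_regVertex_neg_iff (m : ℕ) [NeZero m] {a b c : ZMod m} (hab : a ≠ b) (hac : a ≠ c) :
    orient (regVertex m a) (regVertex m b) (regVertex m c) < 0 ↔ InArc m a b c := by
  rw [← sign_eq_neg_one_iff, sign_orient_regVertex m hab hac, sign_eq_neg_one_iff, sub_neg,
    Nat.cast_lt, InArc, and_iff_right (ZMod.val_pos.mpr (sub_ne_zero_of_ne hac.symm))]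

lemma orient_regVertex_pos_iff (m : ℕ) [NeZero m] {a b c : ZMod m} (hab : a ≠ b) (hac : a ≠ c)
    (hbc : b ≠ c) :
    0 < orient (regVertex m a) (regVertex m b) (regVertex m c) ↔ ¬ InArc m a b c := by
  have hval : (b - a).val ≠ (c - a).val := (ZMod.val_injective m).ne (sub_left_injective.ne hbc)
  rw [← sign_eq_one_iff, sign_orient_regVertex m hab hac, sign_eq_one_iff, sub_pos,
    Nat.cast_lt, InArc, and_iff_right (ZMod.val_pos.mpr (sub_ne_zero_of_ne hac.symm)), not_lt,
    hval.le_iff_lt]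

lemma openSegment_regVertex_inter_nonempty_iff (m : ℕ) [NeZero m] {a b c d : ZMod m}
    (hdist : ([a, b, c, d] : List (ZMod m)).Pairwise (· ≠ ·)) :
    (openSegment ℝ (regVertex m a) (regVertex m b) ∩
        openSegment ℝ (regVertex m c) (regVertex m d)).Nonempty ↔
      Xor (InArc m a b c) (InArc m a b d) := by
  obtain ⟨⟨hab, hac, had⟩, ⟨hbc, hbd⟩, -⟩ := by simpa using hdist
  have hd0 : orient (regVertex m a) (regVertex m b) (regVertex m d) ≠ 0 := by
    by_cases hd : InArc m a b d
    exacts [((orient_regVertex_neg_iff m hab had).2 hd).ne,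
      ((orient_regVertex_pos_iff m hab had hbd).2 hd).ne']
  rw [openSegment_inter_nonempty_iff_orient_mul_neg (sqNorm_regVertex m a)
    (sqNorm_regVertex m b) (sqNorm_regVertex m c) (sqNorm_regVertex m d) hd0, mul_neg_iff,
    orient_regVertex_pos_iff m hab hac hbc,
    orient_regVertex_neg_iff m hab had, orient_regVertex_neg_iff m hab hac,
    orient_regVertex_pos_iff m hab had hbd, xor_def]
  tauto

lemma openSegment_eq_of_pair_eq {α E : Type*} [DecidableEq α] [AddCommGroup E] [Module ℝ E]
    (f : α → E) {a b a' b' : α} (h : ({a, b} : Finset α) = {a', b'}) :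
    openSegment ℝ (f a) (f b) = openSegment ℝ (f a') (f b') := by
  rw [← Finset.coe_inj, Finset.coe_pair, Finset.coe_pair] at h
  rcases Set.pair_eq_pair_iff.mp h with ⟨rfl, rfl⟩ | ⟨rfl, rfl⟩
  exacts [rfl, openSegment_symm ℝ _ _]

theorem openSegments_meet_iff_cross_general (m : ℕ) (hm : 4 ≤ m) (a b c d : ZMod m)
    (hdist : ([a, b, c, d] : List (ZMod m)).Pairwise (· ≠ ·)) :
    (openSegment ℝ (regVertex m a) (regVertex m b) ∩
        openSegment ℝ (regVertex m c) (regVertex m d)).Nonempty ↔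
      Cross m {a, b} {c, d} := by
  have : NeZero m := ⟨by omega⟩
  constructor
  · intro h
    exact ⟨a, b, c, d, rfl, rfl, hdist, (openSegment_regVertex_inter_nonempty_iff m hdist).1 h⟩
  · rintro ⟨a', b', c', d', hab, hcd, hdist', hxor⟩
    rw [openSegment_eq_of_pair_eq (regVertex m) hab,
      openSegment_eq_of_pair_eq (regVertex m) hcd]
    exact (openSegment_regVertex_inter_nonempty_iff m hdist').2 hxor

/-- For diagonals `{a,b}` and `{c,d}` of the `m`-gon with
`a, b, c, d` pairwise distinct, the open segments joining the corresponding
vertices of the regular `m`-gon meet if and only if the diagonals cross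
combinatorially. -/
theorem openSegments_meet_iff_cross (m : ℕ) (hm : 4 ≤ m) (a b c d : ZMod m)
    (hab : IsDiag m {a, b}) (hcd : IsDiag m {c, d})
    (hdist : ([a, b, c, d] : List (ZMod m)).Pairwise (· ≠ ·)) :
    (openSegment ℝ (regVertex m a) (regVertex m b) ∩
        openSegment ℝ (regVertex m c) (regVertex m d)).Nonempty ↔
      Cross m {a, b} {c, d} :=
  openSegments_meet_iff_cross_general m hm a b c d hdist
end

section
/- Let n ≥ 4, let T be a maximal non-crossing set of diagonals of the n-gon, and let d ∈ T. Then there is exactly one diagonal d' ≠ d such that (T \ {d}) ∪ {d'} is again a maximal non-crossing set of diagonals. -/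
/-- A maximal non-crossing set of diagonals (a triangulation). -/
def MaxNonCrossing (n : ℕ) (T : Set (Finset (ZMod n))) : Prop :=
  NonCrossingSet n T ∧
    ∀ B : Set (Finset (ZMod n)), NonCrossingSet n B → T ⊆ B → B = T


/-!
Cut the circle open at a vertex `a` of the diagonal `d = {a, b}`: in the positions `(x - a).val`
two diagonals cross iff their endpoints interleave as natural numbers (`ChordsCross`), so the
geometry becomes linear arithmetic. The diagonal `d` of the triangulation `T` is a side of two
triangles `a p b` and `b q a` of `T` (the apex `p` is the vertex of the arc from `a` to `b` nearest
to `a` that is joined to `b`). A diagonal crossing none of the four sides of the quadrilateral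
`a p b q` but one of its diagonals is the other one. So `{p, q}` is the unique diagonal crossing `d`
and nothing else in `T`; and a diagonal completing `T \ {d}` to a triangulation must cross `d`,
since otherwise maximality of `T` would already put it in `T`.
-/

theorem Finset.pair_eq_pair_iff {α : Type*} [DecidableEq α] {x y z w : α} :
    ({x, y} : Finset α) = {z, w} ↔ x = z ∧ y = w ∨ x = w ∧ y = z := by
  rw [← Finset.coe_inj]
  push_cast
  exact Set.pair_eq_pair_iff

def ChordsCross (i j k l : ℕ) : Prop :=
  (min i j < k ∧ k < max i j ∧ (l < min i j ∨ max i j < l)) ∨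
    (min i j < l ∧ l < max i j ∧ (k < min i j ∨ max i j < k))

namespace ChordsCross

variable {i j k l w x y z : ℕ}

theorem iff_of_lt (h : i < j) :
    ChordsCross i j k l ↔
      (i < k ∧ k < j ∧ (l < i ∨ j < l)) ∨ (i < l ∧ l < j ∧ (k < i ∨ j < k)) := by
  rw [ChordsCross, min_eq_left h.le, max_eq_right h.le]

theorem comm : ChordsCross i j k l ↔ ChordsCross k l i j := by
  unfold ChordsCross; omega

theorem swap_left : ChordsCross i j k l ↔ ChordsCross j i k l := by
  unfold ChordsCross; omega

theorem irrefl : ¬ ChordsCross i j i j := by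
  unfold ChordsCross; omega

theorem irrefl_swap : ¬ ChordsCross i j j i := by
  unfold ChordsCross; omega

theorem not_of_le_succ (hij : i ≤ j) (hj : j ≤ i + 1) : ¬ ChordsCross i j k l := by
  unfold ChordsCross; omega

theorem eq_of_cross_triangle (hwx : w < x) (hxy : x < y) (h : ChordsCross w x k l)
    (hwy : ¬ ChordsCross w y k l) (hxy' : ¬ ChordsCross x y k l) :
    (k = y ∧ w < l ∧ l < x) ∨ (l = y ∧ w < k ∧ k < x) := by
  rw [iff_of_lt hwx] at h
  rw [iff_of_lt (hwx.trans hxy)] at hwy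
  rw [iff_of_lt hxy] at hxy'
  omega

theorem eq_of_cross_quad_left (hwx : w < x) (hxy : x < y) (hyz : y < z)
    (h₁ : ¬ ChordsCross w x k l) (h₂ : ¬ ChordsCross x y k l) (h₃ : ¬ ChordsCross y z k l)
    (h₄ : ¬ ChordsCross z w k l) (h : ChordsCross w y k l) :
    (k = x ∧ l = z) ∨ (k = z ∧ l = x) := by
  rw [swap_left, iff_of_lt (hwx.trans (hxy.trans hyz))] at h₄
  rw [iff_of_lt hwx] at h₁
  rw [iff_of_lt hxy] at h₂
  rw [iff_of_lt hyz] at h₃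
  rw [iff_of_lt (hwx.trans hxy)] at h
  omega

theorem eq_of_cross_quad_right (hwx : w < x) (hxy : x < y) (hyz : y < z)
    (h₁ : ¬ ChordsCross w x k l) (h₂ : ¬ ChordsCross x y k l) (h₃ : ¬ ChordsCross y z k l)
    (h₄ : ¬ ChordsCross z w k l) (h : ChordsCross x z k l) :
    (k = w ∧ l = y) ∨ (k = y ∧ l = w) := by
  rw [swap_left, iff_of_lt (hwx.trans (hxy.trans hyz))] at h₄
  rw [iff_of_lt hwx] at h₁
  rw [iff_of_lt hxy] at h₂
  rw [iff_of_lt hyz] at h₃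
  rw [iff_of_lt (hxy.trans hyz)] at h
  omega

end ChordsCross

section Polygon

variable {n : ℕ}

theorem ne_add_one_of_one_lt_val_sub {u v : ZMod n} (h : 1 < (v - u).val) : v ≠ u + 1 := by
  rintro rfl
  rw [add_sub_cancel_left, ZMod.val_one_eq_one_mod] at h
  exact (Nat.mod_le 1 n).not_gt h

theorem NonCrossingSet.mono {A B : Set (Finset (ZMod n))} (hB : NonCrossingSet n B)
    (hAB : A ⊆ B) : NonCrossingSet n A :=
  ⟨fun e he => hB.1 e (hAB he), fun e he f hf => hB.2 e (hAB he) f (hAB hf)⟩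

variable [NeZero n]

theorem ZMod.val_sub_add_val_sub (o u v : ZMod n) :
    (v - u).val + (u - o).val = (v - o).val ∨ (v - u).val + (u - o).val = (v - o).val + n := by
  have h : v - o = (v - u) + (u - o) := by ring
  rcases lt_or_ge ((v - u).val + (u - o).val) n with hlt | hge
  · left; rw [h, ZMod.val_add_of_lt hlt]
  · right; rw [h, ZMod.val_add_val_of_le hge]

theorem ZMod.val_sub_inj (o : ZMod n) {x y : ZMod n} : (x - o).val = (y - o).val ↔ x = y :=
  (ZMod.val_injective n).eq_iff.trans sub_left_inj

theorem pair_eq_pair_of_val_sub (o : ZMod n) {k l p q : ZMod n}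
    (h : (k - o).val = (p - o).val ∧ (l - o).val = (q - o).val ∨
      (k - o).val = (q - o).val ∧ (l - o).val = (p - o).val) :
    ({k, l} : Finset (ZMod n)) = {p, q} := by
  rw [Finset.pair_eq_pair_iff]
  simpa only [ZMod.val_sub_inj o] using h

theorem one_lt_val_sub {u v : ZMod n} (h₀ : v ≠ u) (h₁ : v ≠ u + 1) : 1 < (v - u).val := by
  by_contra! h
  interval_cases hv : (v - u).val
  · exact h₀ (sub_eq_zero.1 ((ZMod.val_eq_zero _).1 hv))
  · have : Fact (1 < n) := ⟨hv ▸ ZMod.val_lt (v - u)⟩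
    exact h₁ (eq_add_of_sub_eq' (ZMod.val_injective n (hv.trans (ZMod.val_one n).symm)))

theorem isDiag_pair_iff {u v : ZMod n} :
    IsDiag n {u, v} ↔ 1 < (v - u).val ∧ 1 < (u - v).val := by
  constructor
  · rintro ⟨x, y, he, h₀, h₁, h₂⟩
    have hxy := one_lt_val_sub h₀ h₁
    have hyx := one_lt_val_sub h₀.symm fun h => h₂ (eq_sub_of_add_eq h.symm)
    rcases Finset.pair_eq_pair_iff.1 he with ⟨rfl, rfl⟩ | ⟨rfl, rfl⟩
    exacts [⟨hxy, hyx⟩, ⟨hyx, hxy⟩]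
  · rintro ⟨h, h'⟩
    refine ⟨u, v, rfl, fun e => ?_, ne_add_one_of_one_lt_val_sub h,
      fun e => ne_add_one_of_one_lt_val_sub h' (sub_eq_iff_eq_add.1 e.symm)⟩
    rw [e, sub_self, ZMod.val_zero] at h
    omega

theorem inArc_iff (o u v x : ZMod n) :
    InArc n u v x ↔ ((u - o).val < (x - o).val ∧ (x - o).val < (v - o).val) ∨
      ((v - o).val < (u - o).val ∧
        ((u - o).val < (x - o).val ∨ (x - o).val < (v - o).val)) := by
  have := ZMod.val_sub_add_val_sub o u x
  have := ZMod.val_sub_add_val_sub o u v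
  have := ZMod.val_lt (x - o)
  have := ZMod.val_lt (v - o)
  have := ZMod.val_lt (u - o)
  have := ZMod.val_lt (x - u)
  have := ZMod.val_lt (v - u)
  unfold InArc
  omega

theorem crossPts_iff (o u v c c' : ZMod n) :
    CrossPts n u v c c' ↔
      ChordsCross (u - o).val (v - o).val (c - o).val (c' - o).val := by
  change _ ∧ Xor _ _ ↔ _
  rw [inArc_iff o, inArc_iff o]
  simp only [List.pairwise_cons, List.mem_cons, List.not_mem_nil, or_false, forall_eq_or_imp,
    forall_eq, List.Pairwise.nil, and_true, ne_eq, false_implies, implies_true]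
  simp only [← ZMod.val_sub_inj o]
  unfold ChordsCross Xor
  omega

theorem cross_pair_iff (o u v c c' : ZMod n) :
    Cross n {u, v} {c, c'} ↔
      ChordsCross (u - o).val (v - o).val (c - o).val (c' - o).val := by
  refine ⟨fun ⟨x, y, z, w, he, hf, h⟩ => ?_,
    fun h => ⟨u, v, c, c', rfl, rfl, (crossPts_iff o ..).2 h⟩⟩
  rw [crossPts_iff o] at h
  rcases Finset.pair_eq_pair_iff.1 he with ⟨rfl, rfl⟩ | ⟨rfl, rfl⟩ <;>
    rcases Finset.pair_eq_pair_iff.1 hf with ⟨rfl, rfl⟩ | ⟨rfl, rfl⟩ <;>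
    unfold ChordsCross at h ⊢ <;> omega

theorem Cross.symm {e f : Finset (ZMod n)} (h : Cross n e f) : Cross n f e := by
  obtain ⟨a, b, c, d, rfl, rfl, h⟩ := h
  rw [crossPts_iff a, ChordsCross.comm] at h
  exact (cross_pair_iff a ..).2 h

theorem not_cross_self (e : Finset (ZMod n)) : ¬ Cross n e e := by
  rintro ⟨a, b, c, d, rfl, he, h⟩
  rw [crossPts_iff a] at h
  rcases Finset.pair_eq_pair_iff.1 he with ⟨rfl, rfl⟩ | ⟨rfl, rfl⟩
  exacts [ChordsCross.irrefl h, ChordsCross.irrefl_swap h]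

theorem not_cross_side (u : ZMod n) (f : Finset (ZMod n)) : ¬ Cross n {u, u + 1} f := by
  intro h
  obtain ⟨-, -, c, d, -, rfl, -⟩ := id h
  rw [cross_pair_iff u, sub_self, add_sub_cancel_left, ZMod.val_zero,
    ZMod.val_one_eq_one_mod] at h
  exact ChordsCross.not_of_le_succ (Nat.zero_le _) (Nat.mod_le 1 n) h

theorem NonCrossingSet.insert {A : Set (Finset (ZMod n))} {g : Finset (ZMod n)}
    (hA : NonCrossingSet n A) (hg : IsDiag n g) (h : ∀ e ∈ A, ¬ Cross n e g) :
    NonCrossingSet n (insert g A) := by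
  refine ⟨Set.forall_mem_insert.2 ⟨hg, hA.1⟩,
    Set.forall_mem_insert.2 ⟨?_, fun e he => ?_⟩⟩
  · exact Set.forall_mem_insert.2 ⟨not_cross_self g, fun f hf hc => h f hf hc.symm⟩
  · exact Set.forall_mem_insert.2 ⟨h e he, hA.2 e he⟩

theorem MaxNonCrossing.mem_of_forall_not_cross {T : Set (Finset (ZMod n))}
    (hT : MaxNonCrossing n T) {g : Finset (ZMod n)} (hg : IsDiag n g)
    (h : ∀ e ∈ T, ¬ Cross n e g) : g ∈ T :=
  hT.2 _ (hT.1.insert hg h) (Set.subset_insert g T) ▸ Set.mem_insert g T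

theorem MaxNonCrossing.mem_of_not_cross_of_forall_ne {T : Set (Finset (ZMod n))}
    (hT : MaxNonCrossing n T) {d g : Finset (ZMod n)} (hg : IsDiag n g) (hgd : ¬ Cross n g d)
    (h : ∀ e ∈ T, e ≠ d → ¬ Cross n e g) : g ∈ T :=
  hT.mem_of_forall_not_cross hg fun e he =>
    if hed : e = d then hed ▸ fun hc => hgd hc.symm else h e he hed

structure IsFlipOf (T : Set (Finset (ZMod n))) (d f : Finset (ZMod n)) : Prop where
  isDiag : IsDiag n f
  cross : Cross n f d
  not_cross : ∀ e ∈ T, e ≠ d → ¬ Cross n e f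

namespace IsFlipOf

variable {T : Set (Finset (ZMod n))} {d f : Finset (ZMod n)}

theorem ne (h : IsFlipOf T d f) : f ≠ d := by
  rintro rfl
  exact not_cross_self f h.cross

theorem maxNonCrossing (hT : MaxNonCrossing n T) (h : IsFlipOf T d f)
    (huniq : ∀ g, IsFlipOf T d g → g = f) : MaxNonCrossing n ((T \ {d}) ∪ {f}) := by
  rw [Set.union_singleton]
  refine ⟨(hT.1.mono Set.sdiff_subset).insert h.isDiag fun e he => h.not_cross e he.1 he.2,
    fun B hB hsub => (Set.Subset.antisymm · hsub) fun g hg => ?_⟩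
  by_cases hgf : g = f
  · exact Or.inl hgf
  have hcompat : ∀ e ∈ T, e ≠ d → ¬ Cross n e g := fun e he hne =>
    hB.2 e (hsub (Or.inr ⟨he, hne⟩)) g hg
  have hgd : ¬ Cross n g d := fun hc => hgf (huniq g ⟨hB.1 g hg, hc, hcompat⟩)
  refine Or.inr ⟨hT.mem_of_not_cross_of_forall_ne (hB.1 g hg) hgd hcompat, fun hg' => ?_⟩
  rw [Set.mem_singleton_iff.1 hg'] at hg
  exact hB.2 f (hsub (Set.mem_insert f _)) d hg h.cross

theorem of_maxNonCrossing (hT : MaxNonCrossing n T) (hd : d ∈ T) (hf : IsDiag n f)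
    (hne : f ≠ d) (hmax : MaxNonCrossing n ((T \ {d}) ∪ {f})) : IsFlipOf T d f := by
  have hcompat : ∀ e ∈ T, e ≠ d → ¬ Cross n e f := fun e he hed =>
    hmax.1.2 e (Or.inl ⟨he, hed⟩) f (Or.inr rfl)
  have hfT : f ∉ T := fun hfT => by
    have hsub : (T \ {d}) ∪ {f} ⊆ T :=
      Set.union_subset Set.sdiff_subset (Set.singleton_subset_iff.2 hfT)
    have hdmem : d ∈ (T \ {d}) ∪ {f} := hmax.2 T hT.1 hsub ▸ hd
    rcases hdmem with ⟨-, hdd⟩ | hdf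
    exacts [hdd rfl, hne (Set.mem_singleton_iff.1 hdf).symm]
  refine ⟨hf, by_contra fun hfd => hfT ?_, hcompat⟩
  exact hT.mem_of_not_cross_of_forall_ne hf hfd hcompat

end IsFlipOf

def IsEdge (T : Set (Finset (ZMod n))) (u v : ZMod n) : Prop :=
  {u, v} ∈ T ∨ v = u + 1 ∨ u = v + 1

theorem IsEdge.not_cross {T : Set (Finset (ZMod n))} {u v : ZMod n} {f : Finset (ZMod n)}
    (h : IsEdge T u v) (hf : {u, v} ∈ T → ¬ Cross n {u, v} f) : ¬ Cross n {u, v} f := by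
  rcases h with h | rfl | rfl
  · exact hf h
  · exact not_cross_side u f
  · rw [Finset.pair_comm]
    exact not_cross_side v f

variable {T : Set (Finset (ZMod n))} {a b p q : ZMod n}

theorem isEdge_of_minimal (hT : MaxNonCrossing n T) (hd : {a, b} ∈ T)
    (hp : 0 < (p - a).val) (hpb : (p - a).val < (b - a).val) (hedge : IsEdge T p b)
    (hmin : ∀ x, 0 < (x - a).val → (x - a).val < (p - a).val → ¬ IsEdge T x b) :
    IsEdge T a p := by
  have : Fact (1 < n) := ⟨by have := ZMod.val_lt (b - a); omega⟩
  by_cases hp1 : (p - a).val = 1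
  · refine Or.inr (Or.inl ((ZMod.val_sub_inj a).1 ?_))
    rw [hp1, add_sub_cancel_left, ZMod.val_one]
  have hap : 1 < (a - p).val := by
    have := ZMod.val_sub_add_val_sub a p a
    have := ZMod.val_lt (b - a)
    rw [sub_self, ZMod.val_zero] at *
    omega
  refine Or.inl (hT.mem_of_forall_not_cross (isDiag_pair_iff.2 ⟨by omega, hap⟩) ?_)
  intro e he hc
  obtain ⟨k, l, rfl, -⟩ := hT.1.1 e he
  have h₁ := (cross_pair_iff a ..).not.1 (hT.1.2 _ hd _ he)
  have h₂ := (cross_pair_iff a ..).not.1 (hedge.not_cross fun hm => hT.1.2 _ hm _ he)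
  rw [cross_pair_iff a, ChordsCross.comm] at hc
  rw [sub_self, ZMod.val_zero] at h₁ hc
  rcases ChordsCross.eq_of_cross_triangle hp hpb hc h₁ h₂ with ⟨hk, hl⟩ | ⟨hl, hk⟩
  · rw [(ZMod.val_sub_inj a).1 hk, Finset.pair_comm] at he
    exact hmin l hl.1 hl.2 (Or.inl he)
  · rw [(ZMod.val_sub_inj a).1 hl] at he
    exact hmin k hk.1 hk.2 (Or.inl he)

theorem exists_apex (hT : MaxNonCrossing n T) (hd : {a, b} ∈ T) (hb : 1 < (b - a).val) :
    ∃ p, 0 < (p - a).val ∧ (p - a).val < (b - a).val ∧ IsEdge T a p ∧ IsEdge T p b := by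
  classical
  have : Fact (1 < n) := ⟨by have := ZMod.val_lt (b - a); omega⟩
  set S := Finset.univ.filter fun x : ZMod n =>
    0 < (x - a).val ∧ (x - a).val < (b - a).val ∧ IsEdge T x b
  have hS : (b - 1) ∈ S := by
    have := ZMod.val_sub_add_val_sub a (b - 1) b
    have := ZMod.val_lt (b - 1 - a)
    rw [sub_sub_cancel, ZMod.val_one] at *
    refine Finset.mem_filter.2 ⟨Finset.mem_univ _, by omega, by omega, Or.inr (Or.inl ?_)⟩
    ring
  obtain ⟨p, hp, hmin⟩ := Finset.exists_min_image S (fun x => (x - a).val) ⟨_, hS⟩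
  simp only [S, Finset.mem_filter, Finset.mem_univ, true_and] at hp hmin
  obtain ⟨hp₀, hpb, hedge⟩ := hp
  refine ⟨p, hp₀, hpb, isEdge_of_minimal hT hd hp₀ hpb hedge fun x hx hxp hxb => ?_, hedge⟩
  exact (hmin x ⟨hx, hxp.trans hpb, hxb⟩).not_gt hxp

structure IsFlipQuad (T : Set (Finset (ZMod n))) (a b p q : ZMod n) : Prop where
  pos_p : 0 < (p - a).val
  p_lt_b : (p - a).val < (b - a).val
  b_lt_q : (b - a).val < (q - a).val
  edge_ap : IsEdge T a p
  edge_pb : IsEdge T p b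
  edge_bq : IsEdge T b q
  edge_qa : IsEdge T q a

theorem exists_isFlipQuad (hT : MaxNonCrossing n T) (hd : {a, b} ∈ T)
    (hab : 1 < (b - a).val) (hba : 1 < (a - b).val) : ∃ p q, IsFlipQuad T a b p q := by
  obtain ⟨p, hp, hpb, hap, hpb'⟩ := exists_apex hT hd hab
  obtain ⟨q, hq, hqa, hbq, hqa'⟩ := exists_apex hT (Finset.pair_comm a b ▸ hd) hba
  refine ⟨p, q, ⟨hp, hpb, ?_, hap, hpb', hbq, hqa'⟩⟩
  have := ZMod.val_sub_add_val_sub a b q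
  have := ZMod.val_sub_add_val_sub a b a
  have := ZMod.val_lt (q - a)
  rw [sub_self, ZMod.val_zero] at *
  omega

namespace IsFlipQuad

theorem isDiag (hQ : IsFlipQuad T a b p q) : IsDiag n {p, q} := by
  have := hQ.pos_p
  have := hQ.p_lt_b
  have := hQ.b_lt_q
  have := ZMod.val_sub_add_val_sub a p q
  have := ZMod.val_sub_add_val_sub a q p
  have := ZMod.val_lt (q - a)
  have := ZMod.val_lt (q - p)
  have := ZMod.val_lt (p - q)
  exact isDiag_pair_iff.2 ⟨by omega, by omega⟩

theorem cross (hQ : IsFlipQuad T a b p q) : Cross n {p, q} {a, b} := by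
  rw [cross_pair_iff a, sub_self, ZMod.val_zero,
    ChordsCross.iff_of_lt (hQ.p_lt_b.trans hQ.b_lt_q)]
  have := hQ.pos_p
  have := hQ.p_lt_b
  have := hQ.b_lt_q
  omega

theorem eq_of_cross (hQ : IsFlipQuad T a b p q) {f : Finset (ZMod n)} (hf : IsDiag n f)
    (hcompat : ∀ e ∈ T, e ≠ {a, b} → ¬ Cross n e f) :
    (Cross n f {a, b} → f = {p, q}) ∧ (Cross n f {p, q} → f = {a, b}) := by
  obtain ⟨k, l, rfl, -⟩ := hf
  have hside : ∀ {u v}, IsEdge T u v → ({u, v} : Finset (ZMod n)) ≠ {a, b} →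
      ¬ ChordsCross (u - a).val (v - a).val (k - a).val (l - a).val := fun h hne =>
    (cross_pair_iff a ..).not.1 (h.not_cross fun hm => hcompat _ hm hne)
  have hp : p ∉ ({a, b} : Finset (ZMod n)) := by
    have := hQ.pos_p
    have := hQ.p_lt_b
    simp only [Finset.mem_insert, Finset.mem_singleton]
    rintro (rfl | rfl) <;> simp_all
  have hq : q ∉ ({a, b} : Finset (ZMod n)) := by
    have := hQ.b_lt_q
    simp only [Finset.mem_insert, Finset.mem_singleton]
    rintro (rfl | rfl) <;> simp_all
  have h₁ := hside hQ.edge_ap (ne_of_mem_of_not_mem' (by simp) hp)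
  have h₂ := hside hQ.edge_pb (ne_of_mem_of_not_mem' (by simp) hp)
  have h₃ := hside hQ.edge_bq (ne_of_mem_of_not_mem' (by simp) hq)
  have h₄ := hside hQ.edge_qa (ne_of_mem_of_not_mem' (by simp) hq)
  have ha : (a - a).val < (p - a).val := by simpa using hQ.pos_p
  refine ⟨fun h => ?_, fun h => ?_⟩ <;> rw [cross_pair_iff a, ChordsCross.comm] at h
  · exact pair_eq_pair_of_val_sub a
      (ChordsCross.eq_of_cross_quad_left ha hQ.p_lt_b hQ.b_lt_q h₁ h₂ h₃ h₄ h)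
  · exact pair_eq_pair_of_val_sub a
      (ChordsCross.eq_of_cross_quad_right ha hQ.p_lt_b hQ.b_lt_q h₁ h₂ h₃ h₄ h)

theorem isFlipOf (hQ : IsFlipQuad T a b p q) (hT : NonCrossingSet n T) :
    IsFlipOf T {a, b} {p, q} where
  isDiag := hQ.isDiag
  cross := hQ.cross
  not_cross e he hne hc :=
    hne ((hQ.eq_of_cross (hT.1 e he) fun e' he' _ => hT.2 e' he' e he).2 hc)

end IsFlipQuad

theorem existsUnique_isFlipOf (hT : MaxNonCrossing n T) {d : Finset (ZMod n)} (hd : d ∈ T) :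
    ∃! f, IsFlipOf T d f := by
  obtain ⟨a, b, rfl, -⟩ := hT.1.1 d hd
  obtain ⟨hab, hba⟩ := isDiag_pair_iff.1 (hT.1.1 _ hd)
  obtain ⟨p, q, hQ⟩ := exists_isFlipQuad hT hd hab hba
  exact ⟨{p, q}, hQ.isFlipOf hT.1,
    fun f hf => (hQ.eq_of_cross hf.isDiag hf.not_cross).1 hf.cross⟩

end Polygon

/-- For `n ≥ 4`, a maximal non-crossing set `T` of diagonals of
the `n`-gon and `d ∈ T`, there is exactly one diagonal `d' ≠ d` such that
`(T \ {d}) ∪ {d'}` is again a maximal non-crossing set (the edge flip). -/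
theorem unique_flip (n : ℕ) (hn : 4 ≤ n)
    (T : Set (Finset (ZMod n))) (hT : MaxNonCrossing n T)
    (d : Finset (ZMod n)) (hd : d ∈ T) :
    ∃! d' : Finset (ZMod n),
      IsDiag n d' ∧ d' ≠ d ∧ MaxNonCrossing n ((T \ {d}) ∪ {d'}) := by
  have : NeZero n := ⟨by omega⟩
  obtain ⟨f, hf, huniq⟩ := existsUnique_isFlipOf hT hd
  exact ⟨f, ⟨hf.isDiag, hf.ne, hf.maxNonCrossing hT huniq⟩,
    fun g ⟨hg, hgd, hmax⟩ => huniq g (IsFlipOf.of_maxNonCrossing hT hd hg hgd hmax)⟩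
end
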